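/- arXiv:math/0605231 — 2 statements merged into one kernel-verified Lean document; each statement's English description precedes it below -/
import Mathlib

section
/- Let p ≥ 3 be prime and suppose for each k ∈ N we are given α_k, β_k, γ_k ∈ Q_p with |α_k|_p, |β_k|_p, |γ_k|_p ≤ 1/p; set a_k = exp_p(α_k), b_k = exp_p(β_k), c_k = exp_p(γ_k), f_k(x) = (a_k x + b_k)/(c_k + x). If two sequences (u_n) and (v_n) in D = {z ∈ Q_p : |z|_p = 1, |z − 1|_p ≤ 1/p} both satisfy u_n = f_{n+1}(u_{n+1}) · f_{n+2}(u_{n+2}) for all n ∈ N, then u_n = v_n for all n. -/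
noncomputable def pexp (p : ℕ) [Fact p.Prime] (x : ℚ_[p]) : ℚ_[p] :=
  NormedSpace.exp x

noncomputable def plog (p : ℕ) [Fact p.Prime] (z : ℚ_[p]) : ℚ_[p] :=
  ∑' n : ℕ, (-1) ^ n * (z - 1) ^ (n + 1) / (n + 1)

/-! On the disc `D = {z : ‖z - 1‖ ≤ 1/p}` the denominators satisfy `‖c + x‖ = 1` (as `p` is odd,
`‖2‖ = 1`), and `f(x) - f(y) = (a c - b)(x - y) / ((c + x)(c + y))` with `‖a c - b‖ ≤ 1/p`. So every
`f_k` is bounded by `1` and `1/p`-Lipschitz on `D`, once `exp_p` is seen to map `‖x‖ ≤ 1/p` into `D`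
(Legendre's formula gives `2 v_p(n!) ≤ n - 1`). Writing `u_n - v_n` as
`f(u₁) (f(u₂) - f(v₂)) + (f(u₁) - f(v₁)) f(v₂)`, the ultrametric inequality gives
`‖u_n - v_n‖ ≤ p⁻¹ max ‖u_{n+i} - v_{n+i}‖ (i = 1, 2)`, and iterating, `‖u_n - v_n‖ ≤ p^{-m}` for
all `m`. -/

open Filter Topology
open scoped Nat

section UltrametricRing

variable {R : Type*} [NormedRing R] [IsUltrametricDist R]

theorem norm_mul_sub_mul_le_max {a b c d : R} (ha : ‖a‖ ≤ 1) (hd : ‖d‖ ≤ 1) :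
    ‖a * b - c * d‖ ≤ max ‖a - c‖ ‖b - d‖ := by
  rw [show a * b - c * d = (a - c) * d + a * (b - d) by noncomm_ring]
  refine (IsUltrametricDist.norm_add_le_max _ _).trans (max_le_max ?_ ?_)
  · exact (norm_mul_le _ _).trans (mul_le_of_le_one_right (norm_nonneg _) hd)
  · exact (norm_mul_le _ _).trans (mul_le_of_le_one_left (norm_nonneg _) ha)

theorem norm_sub_le_mul_max_of_eq_mul_succ {S : Set R} {g : ℕ → R → R} {r : ℝ} (hr : 0 ≤ r)
    (hg : ∀ k, ∀ x ∈ S, ‖g k x‖ ≤ 1)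
    (hlip : ∀ k, ∀ x ∈ S, ∀ y ∈ S, ‖g k x - g k y‖ ≤ r * ‖x - y‖) {u v : ℕ → R}
    (hu : ∀ n, u n ∈ S) (hv : ∀ n, v n ∈ S)
    (hru : ∀ n, u n = g (n + 1) (u (n + 1)) * g (n + 2) (u (n + 2)))
    (hrv : ∀ n, v n = g (n + 1) (v (n + 1)) * g (n + 2) (v (n + 2))) (n : ℕ) :
    ‖u n - v n‖ ≤ r * max ‖u (n + 1) - v (n + 1)‖ ‖u (n + 2) - v (n + 2)‖ := by
  rw [hru n, hrv n, mul_max_of_nonneg _ _ hr]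
  exact (norm_mul_sub_mul_le_max (hg _ _ (hu _)) (hg _ _ (hv _))).trans
    (max_le_max (hlip _ _ (hu _) _ (hv _)) (hlip _ _ (hu _) _ (hv _)))

end UltrametricRing

section Ultrametric

variable {K : Type*} [NormedField K] [IsUltrametricDist K] {a b c x y : K}

theorem norm_le_one_of_norm_sub_one_le_one (h : ‖x - 1‖ ≤ 1) : ‖x‖ ≤ 1 := by
  simpa [h] using IsUltrametricDist.norm_add_one_le_max_norm_one (x - 1)

theorem norm_add_eq_one_of_norm_sub_one_lt_one (h2 : ‖(2 : K)‖ = 1) (hc : ‖c - 1‖ < 1)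
    (hx : ‖x - 1‖ < 1) : ‖c + x‖ = 1 := by
  have hsmall : ‖(c - 1) + (x - 1)‖ < 1 :=
    (IsUltrametricDist.norm_add_le_max _ _).trans_lt (max_lt hc hx)
  rw [show c + x = 2 + ((c - 1) + (x - 1)) by ring,
    IsUltrametricDist.norm_add_eq_max_of_norm_ne_norm (h2 ▸ hsmall.ne'), h2,
    max_eq_left hsmall.le]

theorem norm_mul_sub_le_of_norm_sub_one_le {r : ℝ} (hr : r ≤ 1) (ha : ‖a - 1‖ ≤ r)
    (hb : ‖b - 1‖ ≤ r) (hc : ‖c - 1‖ ≤ r) : ‖a * c - b‖ ≤ r := by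
  calc ‖a * c - b‖ = ‖(a * c - 1 * 1) + (1 - b)‖ := by congr 1; ring
    _ ≤ max (max ‖a - 1‖ ‖c - 1‖) ‖1 - b‖ := (IsUltrametricDist.norm_add_le_max _ _).trans
        (max_le_max (norm_mul_sub_mul_le_max (norm_le_one_of_norm_sub_one_le_one (ha.trans hr))
          norm_one.le) le_rfl)
    _ ≤ r := by rw [norm_sub_rev 1 b]; exact max_le (max_le ha hc) hb

theorem norm_moebius_le_one (h2 : ‖(2 : K)‖ = 1) (hc : ‖c - 1‖ < 1) (hx : ‖x - 1‖ < 1)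
    (ha : ‖a - 1‖ ≤ 1) (hb : ‖b - 1‖ ≤ 1) :
    ‖(a * x + b) / (c + x)‖ ≤ 1 := by
  rw [norm_div, norm_add_eq_one_of_norm_sub_one_lt_one h2 hc hx, div_one]
  refine (IsUltrametricDist.norm_add_le_max _ _).trans (max_le ?_ ?_)
  · rw [norm_mul]
    exact mul_le_one₀ (norm_le_one_of_norm_sub_one_le_one ha) (norm_nonneg _)
      (norm_le_one_of_norm_sub_one_le_one hx.le)
  · exact norm_le_one_of_norm_sub_one_le_one hb

theorem norm_moebius_sub_moebius (h2 : ‖(2 : K)‖ = 1) (hc : ‖c - 1‖ < 1) (hx : ‖x - 1‖ < 1)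
    (hy : ‖y - 1‖ < 1) :
    ‖(a * x + b) / (c + x) - (a * y + b) / (c + y)‖ = ‖a * c - b‖ * ‖x - y‖ := by
  have hcx := norm_add_eq_one_of_norm_sub_one_lt_one h2 hc hx
  have hcy := norm_add_eq_one_of_norm_sub_one_lt_one h2 hc hy
  have hcx0 : c + x ≠ 0 := norm_ne_zero_iff.mp (by simp [hcx])
  have hcy0 : c + y ≠ 0 := norm_ne_zero_iff.mp (by simp [hcy])
  rw [div_sub_div _ _ hcx0 hcy0, norm_div, norm_mul (c + x), hcx, hcy, mul_one, div_one,
    ← norm_mul]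
  congr 1
  ring

theorem norm_moebius_sub_moebius_le {r : ℝ} (h2 : ‖(2 : K)‖ = 1) (hr : r < 1) (ha : ‖a - 1‖ ≤ r)
    (hb : ‖b - 1‖ ≤ r) (hc : ‖c - 1‖ ≤ r) (hx : ‖x - 1‖ ≤ r) (hy : ‖y - 1‖ ≤ r) :
    ‖(a * x + b) / (c + x) - (a * y + b) / (c + y)‖ ≤ r * ‖x - y‖ := by
  rw [norm_moebius_sub_moebius h2 (hc.trans_lt hr) (hx.trans_lt hr) (hy.trans_lt hr)]
  gcongr
  exact norm_mul_sub_le_of_norm_sub_one_le hr.le ha hb hc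

end Ultrametric

theorem two_mul_padicValNat_factorial_le {p : ℕ} [hp : Fact p.Prime] (hp2 : p ≠ 2) (n : ℕ) :
    2 * padicValNat p n ! ≤ n - 1 := by
  rcases eq_or_ne n 0 with rfl | hn
  · simp
  have hlt := sub_one_mul_padicValNat_factorial_lt_of_ne_zero p hn
  have h2 : 2 ≤ p - 1 := by have := hp.out.two_le; omega
  have := Nat.mul_le_mul_right (padicValNat p n !) h2
  omega

namespace Padic

variable {p : ℕ} [hp : Fact p.Prime]

theorem norm_inv_factorial (n : ℕ) :
    ‖((n ! : ℕ) : ℚ_[p])⁻¹‖ = (p : ℝ) ^ padicValNat p n ! := by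
  rw [norm_inv, norm_eq_zpow_neg_valuation (by exact_mod_cast n.factorial_ne_zero),
    valuation_natCast, zpow_neg, inv_inv, zpow_natCast]

theorem norm_two_eq_one (hp2 : p ≠ 2) : ‖(2 : ℚ_[p])‖ = 1 := by
  simpa using (norm_natCast_eq_one_iff (p := p) (n := 2)).mpr
    ((Nat.coprime_primes hp.out Nat.prime_two).mpr hp2)

theorem norm_inv_factorial_smul_pow_le (hp2 : p ≠ 2) {x : ℚ_[p]} (hx : ‖x‖ ≤ (p : ℝ)⁻¹)
    (n : ℕ) : ‖((n ! : ℕ) : ℚ_[p])⁻¹ • x ^ n‖ ≤ (p : ℝ)⁻¹ ^ ((n + 1) / 2) := by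
  have hv := two_mul_padicValNat_factorial_le hp2 n
  have hp0 : (p : ℝ) ≠ 0 := by exact_mod_cast hp.out.ne_zero
  have hp1 : (1 : ℝ) ≤ p := by exact_mod_cast hp.out.one_lt.le
  calc ‖((n ! : ℕ) : ℚ_[p])⁻¹ • x ^ n‖ ≤ (p : ℝ) ^ padicValNat p n ! * (p : ℝ)⁻¹ ^ n := by
        rw [norm_smul, norm_inv_factorial, norm_pow]
        gcongr
    _ = (p : ℝ)⁻¹ ^ (n - padicValNat p n !) := by
        rw [pow_sub₀ _ (inv_ne_zero hp0) (by omega), inv_pow, inv_pow, inv_inv, mul_comm]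
    _ ≤ (p : ℝ)⁻¹ ^ ((n + 1) / 2) :=
        pow_le_pow_of_le_one (by positivity) (inv_le_one_of_one_le₀ hp1) (by omega)

end Padic

theorem norm_pexp_sub_one_le {p : ℕ} [hp : Fact p.Prime] (hp2 : p ≠ 2) {x : ℚ_[p]}
    (hx : ‖x‖ ≤ (p : ℝ)⁻¹) : ‖pexp p x - 1‖ ≤ (p : ℝ)⁻¹ := by
  set t : ℕ → ℚ_[p] := fun n => ((n ! : ℕ) : ℚ_[p])⁻¹ • x ^ n
  have hbound := Padic.norm_inv_factorial_smul_pow_le hp2 hx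
  have hp1 : (p : ℝ)⁻¹ < 1 := inv_lt_one_of_one_lt₀ (by exact_mod_cast hp.out.one_lt)
  have ht : Tendsto t cofinite (𝓝 0) := by
    rw [Nat.cofinite_eq_atTop]
    refine squeeze_zero_norm hbound <|
      (tendsto_pow_atTop_nhds_zero_of_lt_one (by positivity) hp1).comp ?_
    exact tendsto_atTop_mono (fun n => Nat.div_le_div_right n.le_succ)
      (Nat.tendsto_div_const_atTop two_ne_zero)
  have hsum : Summable t := NonarchimedeanAddGroup.summable_of_tendsto_cofinite_zero ht
  have htail : pexp p x - 1 = ∑' n, t (n + 1) := by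
    have hexp : pexp p x = ∑' n, t n := by simp only [pexp, NormedSpace.exp_eq_tsum ℚ_[p]]; rfl
    rw [hexp, hsum.tsum_eq_zero_add]
    simp [t]
  rw [htail]
  refine IsUltrametricDist.norm_tsum_le_of_forall_le_of_nonneg (by positivity) fun n => ?_
  exact (hbound (n + 1)).trans (pow_le_of_le_one (by positivity) hp1.le (by omega))

theorem nonpos_of_le_mul_max_succ {d : ℕ → ℝ} {B r : ℝ} (hB : ∀ n, d n ≤ B) (hr0 : 0 ≤ r)
    (hr1 : r < 1) (hd : ∀ n, d n ≤ r * max (d (n + 1)) (d (n + 2))) (n : ℕ) : d n ≤ 0 := by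
  have hpow : ∀ m n, d n ≤ B * r ^ m := by
    intro m
    induction m with
    | zero => simpa using hB
    | succ m ih =>
      intro n
      calc d n ≤ r * max (d (n + 1)) (d (n + 2)) := hd n
        _ ≤ r * (B * r ^ m) := by gcongr; exact max_le (ih _) (ih _)
        _ = B * r ^ (m + 1) := by ring
  refine ge_of_tendsto (x := atTop) ?_ (Eventually.of_forall fun m => hpow m n)
  simpa using (tendsto_pow_atTop_nhds_zero_of_lt_one hr0 hr1).const_mul B

theorem stmt10 (p : ℕ) [Fact p.Prime] (hp : 3 ≤ p) (α β γ : ℕ → ℚ_[p])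
    (hα : ∀ k, ‖α k‖ ≤ (p : ℝ)⁻¹) (hβ : ∀ k, ‖β k‖ ≤ (p : ℝ)⁻¹) (hγ : ∀ k, ‖γ k‖ ≤ (p : ℝ)⁻¹)
    (a b c : ℕ → ℚ_[p]) (ha : ∀ k, a k = pexp p (α k)) (hb : ∀ k, b k = pexp p (β k))
    (hc : ∀ k, c k = pexp p (γ k))
    (f : ℕ → ℚ_[p] → ℚ_[p]) (hf : ∀ k x, f k x = (a k * x + b k) / (c k + x))
    (u v : ℕ → ℚ_[p])
    (hu : ∀ n, ‖u n‖ = 1 ∧ ‖u n - 1‖ ≤ (p : ℝ)⁻¹)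
    (hv : ∀ n, ‖v n‖ = 1 ∧ ‖v n - 1‖ ≤ (p : ℝ)⁻¹)
    (hru : ∀ n, u n = f (n + 1) (u (n + 1)) * f (n + 2) (u (n + 2)))
    (hrv : ∀ n, v n = f (n + 1) (v (n + 1)) * f (n + 2) (v (n + 2))) :
    ∀ n, u n = v n := by
  have hp2 : p ≠ 2 := by omega
  set r : ℝ := (p : ℝ)⁻¹
  have hr1 : r < 1 := inv_lt_one_of_one_lt₀ (by exact_mod_cast (by omega : 1 < p))
  have hA : ∀ k, ‖a k - 1‖ ≤ r := fun k => ha k ▸ norm_pexp_sub_one_le hp2 (hα k)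
  have hB : ∀ k, ‖b k - 1‖ ≤ r := fun k => hb k ▸ norm_pexp_sub_one_le hp2 (hβ k)
  have hC : ∀ k, ‖c k - 1‖ ≤ r := fun k => hc k ▸ norm_pexp_sub_one_le hp2 (hγ k)
  have h2 := Padic.norm_two_eq_one hp2
  have hstep := norm_sub_le_mul_max_of_eq_mul_succ (S := {z | ‖z - 1‖ ≤ r}) (r := r)
    (by positivity)
    (fun k x (hx : ‖x - 1‖ ≤ r) => hf k x ▸ norm_moebius_le_one h2 ((hC k).trans_lt hr1)
      (hx.trans_lt hr1) ((hA k).trans hr1.le) ((hB k).trans hr1.le))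
    (fun k x hx y hy => by
      rw [hf, hf]; exact norm_moebius_sub_moebius_le h2 hr1 (hA k) (hB k) (hC k) hx hy)
    (fun n => (hu n).2) (fun n => (hv n).2) hru hrv
  have hbound : ∀ n, ‖u n - v n‖ ≤ 1 := fun n => by
    have := dist_triangle_max (u n) 1 (v n)
    rw [dist_eq_norm, dist_eq_norm, dist_eq_norm, norm_sub_rev 1] at this
    exact this.trans (max_le ((hu n).2.trans hr1.le) ((hv n).2.trans hr1.le))
  intro n
  exact sub_eq_zero.mp <| norm_le_zero_iff.mp <|
    nonpos_of_le_mul_max_succ hbound (by positivity) hr1 hstep n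
end

section
/- Let p ≥ 3 be prime and a, b, c ∈ Q_p with |a − 1|_p ≤ 1/p, |b − 1|_p ≤ 1/p, |c − 1|_p ≤ 1/p. Then the equation u = ((a u + b)/(c + u))^2 has exactly one solution u in the set D = {z ∈ Q_p : |z|_p = 1, |z − 1|_p ≤ 1/p}. -/
open Metric Set Function
open scoped NNReal

theorem LipschitzOnWith.existsUnique_isFixedPt {α : Type*} [MetricSpace α]
    {K : ℝ≥0} {f : α → α} {s : Set α} (hs : IsComplete s) (hne : s.Nonempty) (hK : K < 1)
    (hsf : MapsTo f s s) (hf : LipschitzOnWith K f s) :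
    ∃! x, x ∈ s ∧ IsFixedPt f x := by
  have hcontr : ContractingWith K (hsf.restrict f s s) := ⟨hK, hf.mapsToRestrict hsf⟩
  obtain ⟨x₀, hx₀⟩ := hne
  obtain ⟨x, hx, hfx, -⟩ := hcontr.exists_fixedPoint' hs hsf hx₀ (edist_ne_top _ _)
  refine ⟨x, ⟨hx, hfx⟩, fun y ⟨hy, hfy⟩ => ?_⟩
  have := hs.completeSpace_coe
  exact congrArg Subtype.val <| hcontr.fixedPoint_unique' (x := ⟨y, hy⟩) (y := ⟨x, hx⟩)
    (Subtype.ext hfy) (Subtype.ext hfx)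

namespace IsUltrametricDist

theorem norm_eq_of_norm_sub_lt_right {E : Type*} [SeminormedAddCommGroup E]
    [IsUltrametricDist E] {x y : E} (h : ‖x - y‖ < ‖y‖) : ‖x‖ = ‖y‖ := by
  simpa [max_eq_right h.le] using norm_add_eq_max_of_norm_ne_norm h.ne

section UnitBall

variable {K : Type*} [NormedField K] [IsUltrametricDist K] {r : ℝ} {x y z w : K}

theorem norm_eq_one_of_mem_closedBall_one (hr : r < 1) (hx : x ∈ closedBall (1 : K) r) :
    ‖x‖ = 1 := by
  rw [mem_closedBall_iff_norm] at hx
  exact (norm_eq_of_norm_sub_lt_right (x := x) (y := 1)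
    (by rw [norm_one]; exact hx.trans_lt hr)).trans norm_one

theorem norm_sub_le_of_mem_closedBall (hx : x ∈ closedBall z r) (hy : y ∈ closedBall z r) :
    ‖x - y‖ ≤ r := by
  rw [← dist_eq_norm]
  exact (dist_triangle_max x z y).trans (max_le hx (mem_closedBall'.mp hy))

theorem norm_add_eq_one_of_mem_closedBall_one (h2 : ‖(2 : K)‖ = 1) (hr : r < 1)
    (hx : x ∈ closedBall (1 : K) r) (hy : y ∈ closedBall (1 : K) r) : ‖x + y‖ = 1 := by
  have : ‖x + y - 2‖ < ‖(2 : K)‖ := by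
    rw [mem_closedBall_iff_norm] at hx hy
    rw [h2, show x + y - 2 = (x - 1) + (y - 1) by ring]
    exact ((norm_add_le_max _ _).trans (max_le hx hy)).trans_lt hr
  rw [norm_eq_of_norm_sub_lt_right this, h2]

theorem norm_sq_sub_sq_le (hx : ‖x‖ ≤ 1) (hy : ‖y‖ ≤ 1) : ‖x ^ 2 - y ^ 2‖ ≤ ‖x - y‖ := by
  rw [sq_sub_sq, norm_mul]
  exact mul_le_of_le_one_left (norm_nonneg _)
    ((norm_add_le_max x y).trans (max_le hx hy))

theorem sq_mem_closedBall_one (hr : r < 1) (hx : x ∈ closedBall (1 : K) r) :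
    x ^ 2 ∈ closedBall (1 : K) r := by
  have hx₁ := norm_eq_one_of_mem_closedBall_one hr hx
  rw [mem_closedBall_iff_norm] at hx ⊢
  simpa using (norm_sq_sub_sq_le hx₁.le norm_one.le).trans hx

theorem norm_sub_one_mul_add_sub_le (hr : r < 1) (hx : x ∈ closedBall (1 : K) r)
    (hy : y ∈ closedBall (1 : K) r) (hz : z ∈ closedBall (1 : K) r)
    (hw : w ∈ closedBall (1 : K) r) : ‖(x - 1) * y + (z - w)‖ ≤ r := by
  refine (norm_add_le_max _ _).trans (max_le ?_ ?_)
  · rw [norm_mul, norm_eq_one_of_mem_closedBall_one hr hy, mul_one]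
    exact mem_closedBall_iff_norm.mp hx
  · exact norm_sub_le_of_mem_closedBall hz hw

end UnitBall

end IsUltrametricDist

open IsUltrametricDist

section SquaredMobius

variable {K : Type*} [NormedField K] [IsUltrametricDist K] {r : ℝ} {a b c u v : K}

theorem div_mem_closedBall_one (h2 : ‖(2 : K)‖ = 1) (hr : r < 1)
    (ha : a ∈ closedBall (1 : K) r) (hb : b ∈ closedBall (1 : K) r)
    (hc : c ∈ closedBall (1 : K) r) (hu : u ∈ closedBall (1 : K) r) :
    (a * u + b) / (c + u) ∈ closedBall (1 : K) r := by
  have hcu := norm_add_eq_one_of_mem_closedBall_one h2 hr hc hu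
  have hcu₀ : c + u ≠ 0 := norm_ne_zero_iff.mp (by simp [hcu])
  rw [mem_closedBall_iff_norm,
    show (a * u + b) / (c + u) - 1 = ((a - 1) * u + (b - c)) / (c + u) by field_simp; ring,
    norm_div, hcu, div_one]
  exact norm_sub_one_mul_add_sub_le hr ha hu hb hc

theorem norm_div_sub_div_le (h2 : ‖(2 : K)‖ = 1) (hr : r < 1)
    (ha : a ∈ closedBall (1 : K) r) (hb : b ∈ closedBall (1 : K) r)
    (hc : c ∈ closedBall (1 : K) r) (hu : u ∈ closedBall (1 : K) r)
    (hv : v ∈ closedBall (1 : K) r) :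
    ‖(a * u + b) / (c + u) - (a * v + b) / (c + v)‖ ≤ r * ‖u - v‖ := by
  have hcu := norm_add_eq_one_of_mem_closedBall_one h2 hr hc hu
  have hcv := norm_add_eq_one_of_mem_closedBall_one h2 hr hc hv
  have hcu₀ : c + u ≠ 0 := norm_ne_zero_iff.mp (by simp [hcu])
  have hcv₀ : c + v ≠ 0 := norm_ne_zero_iff.mp (by simp [hcv])
  rw [show (a * u + b) / (c + u) - (a * v + b) / (c + v) =
      ((a - 1) * c + (c - b)) * (u - v) / ((c + u) * (c + v)) by field_simp; ring,
    norm_div, norm_mul, norm_mul, hcu, hcv, mul_one, div_one]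
  exact mul_le_mul_of_nonneg_right (norm_sub_one_mul_add_sub_le hr ha hc hc hb) (norm_nonneg _)

theorem existsUnique_mem_closedBall_eq_div_sq [CompleteSpace K] (h2 : ‖(2 : K)‖ = 1)
    {r : ℝ≥0} (hr : r < 1) (ha : a ∈ closedBall (1 : K) r) (hb : b ∈ closedBall (1 : K) r)
    (hc : c ∈ closedBall (1 : K) r) :
    ∃! u, u ∈ closedBall (1 : K) r ∧ u = ((a * u + b) / (c + u)) ^ 2 := by
  have hr' : (r : ℝ) < 1 := hr
  set g : K → K := fun u => (a * u + b) / (c + u)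
  have hg : MapsTo g (closedBall 1 r) (closedBall 1 r) := fun u hu =>
    div_mem_closedBall_one h2 hr' ha hb hc hu
  have hF : MapsTo (fun u => g u ^ 2) (closedBall 1 r) (closedBall 1 r) := fun u hu =>
    sq_mem_closedBall_one hr' (hg hu)
  have hFlip : LipschitzOnWith r (fun u => g u ^ 2) (closedBall 1 r) :=
    LipschitzOnWith.of_dist_le_mul fun u hu v hv => by
      simp only [dist_eq_norm]
      exact (norm_sq_sub_sq_le (norm_eq_one_of_mem_closedBall_one hr' (hg hu)).le
        (norm_eq_one_of_mem_closedBall_one hr' (hg hv)).le).trans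
        (norm_div_sub_div_le h2 hr' ha hb hc hu hv)
  simpa [IsFixedPt, eq_comm] using LipschitzOnWith.existsUnique_isFixedPt
    isClosed_closedBall.isComplete ⟨1, mem_closedBall_self r.2⟩ hr hF hFlip

end SquaredMobius

theorem Padic.norm_two_eq_one_s13 {p : ℕ} [Fact p.Prime] (hp : p ≠ 2) : ‖(2 : ℚ_[p])‖ = 1 := by
  exact_mod_cast Padic.norm_natCast_eq_one_iff.mpr
    ((Nat.coprime_primes Fact.out Nat.prime_two).mpr hp)

theorem stmt13 (p : ℕ) [Fact p.Prime] (hp : 3 ≤ p) (a b c : ℚ_[p])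
    (ha : ‖a - 1‖ ≤ (p : ℝ)⁻¹) (hb : ‖b - 1‖ ≤ (p : ℝ)⁻¹) (hc : ‖c - 1‖ ≤ (p : ℝ)⁻¹) :
    ∃! u : ℚ_[p], (‖u‖ = 1 ∧ ‖u - 1‖ ≤ (p : ℝ)⁻¹) ∧ u = ((a * u + b) / (c + u)) ^ 2 := by
  set r : ℝ≥0 := (p : ℝ≥0)⁻¹
  have hr : r < 1 := inv_lt_one_of_one_lt₀ (by exact_mod_cast (by omega : 1 < p))
  have hball (x : ℚ_[p]) : ‖x - 1‖ ≤ (p : ℝ)⁻¹ ↔ x ∈ closedBall 1 r := by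
    simp [r, dist_eq_norm]
  refine (existsUnique_congr fun u => ?_).mpr <| existsUnique_mem_closedBall_eq_div_sq
    (Padic.norm_two_eq_one_s13 (by omega)) hr ((hball a).mp ha) ((hball b).mp hb) ((hball c).mp hc)
  rw [hball, and_iff_right_of_imp (norm_eq_one_of_mem_closedBall_one (NNReal.coe_lt_one.mpr hr))]
end
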